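/- arXiv:2001.08356 — 5 statements merged into one kernel-verified Lean document; each statement's English description precedes it below -/
import Mathlib

section
/- Suppose F : ℝ^d → ℝ has L-Lipschitz gradient and satisfies the dissipativity condition -⟪∇F(x), x⟫ ≤ -λ₀‖x‖² + M₀ for some λ₀ > 0, M₀ ≥ 0. Then for any x, with x* an arbitrary fixed point, ‖∇F(x)‖² ≥ (λ₀²/4)‖x - x*‖² - λ₀ M₁, where M₁ = λ₀‖x*‖² + ((2λ₀ + L)/(2λ₀))‖x*‖² + M₀. -/
open Real

/-- Dissipativity implies a quadratic lower bound on the gradient norm away from an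
arbitrary fixed point x*. -/
theorem stmt1 (d : ℕ) (F : EuclideanSpace ℝ (Fin d) → ℝ) (L lam0 M0 : ℝ)
    (hL : 0 < L) (hlam0 : 0 < lam0) (hM0 : 0 ≤ M0)
    (hdiff : Differentiable ℝ F)
    (hLip : ∀ x y, ‖gradient F x - gradient F y‖ ≤ L * ‖x - y‖)
    (hdissip : ∀ x : EuclideanSpace ℝ (Fin d),
      -(inner ℝ (gradient F x) x : ℝ) ≤ -lam0 * ‖x‖ ^ 2 + M0)
    (xstar : EuclideanSpace ℝ (Fin d)) :
    ∀ x : EuclideanSpace ℝ (Fin d),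
      ‖gradient F x‖ ^ 2 ≥ lam0 ^ 2 / 4 * ‖x - xstar‖ ^ 2
        - lam0 * (lam0 * ‖xstar‖ ^ 2 + (2 * lam0 + L) / (2 * lam0) * ‖xstar‖ ^ 2 + M0) := by
  intro x
  have h1 : lam0 * ‖x‖ ^ 2 - M0 ≤ (inner ℝ (gradient F x) x : ℝ) := by
    have := hdissip x; linarith
  have h2 : (inner ℝ (gradient F x) x : ℝ) ≤ ‖gradient F x‖ * ‖x‖ := real_inner_le_norm _ _
  have h3 : ‖x - xstar‖ ≤ ‖x‖ + ‖xstar‖ := norm_sub_le _ _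
  have hg : 0 ≤ ‖gradient F x‖ := norm_nonneg _
  have hx : 0 ≤ ‖x‖ := norm_nonneg _
  have hxs : 0 ≤ ‖xstar‖ := norm_nonneg _
  have hd : 0 ≤ ‖x - xstar‖ := norm_nonneg _
  have hclaim : ‖gradient F x‖ ^ 2 ≥ lam0 ^ 2 / 2 * ‖x‖ ^ 2 - lam0 * M0 := by
    rcases le_or_gt (lam0 * ‖x‖ ^ 2) (2 * M0) with h | h
    · nlinarith
    · have hxpos : 0 < ‖x‖ := by nlinarith
      have h4 : lam0 * ‖x‖ ^ 2 - M0 ≤ ‖gradient F x‖ * ‖x‖ := le_trans h1 h2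
      have h5 : (lam0 * ‖x‖ ^ 2 - M0) ^ 2 ≤ (‖gradient F x‖ * ‖x‖) ^ 2 := by
        apply sq_le_sq' <;> nlinarith
      nlinarith [sq_nonneg (‖x‖ * M0)]
  have h3sq : ‖x - xstar‖ ^ 2 ≤ 2 * ‖x‖ ^ 2 + 2 * ‖xstar‖ ^ 2 := by
    nlinarith [sq_nonneg (‖x‖ - ‖xstar‖)]
  have hM1 : 0 ≤ (2 * lam0 + L) / (2 * lam0) * ‖xstar‖ ^ 2 := by positivity
  nlinarith [sq_nonneg (lam0 * ‖xstar‖), sq_nonneg lam0, sq_nonneg ‖xstar‖]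
end

section
/- Let F : ℝ^d → ℝ have L-Lipschitz gradient, let 0 < h with Lh ≤ 1/2, let γ > 0, and let Z be a standard d-dimensional Gaussian random vector. Then the Langevin step Y' = Y - h∇F(Y) + √(2γh)·Z satisfies E[F(Y')] ≤ F(Y) - (h/2)‖∇F(Y)‖² + 2γLhd. -/
/-! The density in the integral is that of Mathlib's `stdGaussian` (the two measures have the same
characteristic function), so the left side is `E[F(Y')]` for `Z ∼ stdGaussian`. By the mean value
inequality a Lipschitz gradient gives the quadratic model
`|F y - F x - ⟪∇F x, y - x⟫| ≤ L ‖y - x‖²`, whose expectation at `x = Y`, `y = Y'` involves only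
`E Z = 0` and `E ‖Z‖² = d`. Finally `L h ≤ 1/2` absorbs the term `L h² ‖∇F Y‖²`. -/

open Real MeasureTheory ProbabilityTheory
open scoped RealInnerProductSpace

section

variable {E : Type*} [NormedAddCommGroup E] [InnerProductSpace ℝ E]

lemma norm_add_smul_sq (w z : E) (s : ℝ) :
    ‖w + s • z‖ ^ 2 = ‖w‖ ^ 2 + 2 * s * ⟪w, z⟫ + s ^ 2 * ‖z‖ ^ 2 := by
  rw [norm_add_sq_real, real_inner_smul_right, norm_smul, mul_pow, Real.norm_eq_abs, sq_abs]
  ring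

theorem abs_sub_sub_inner_gradient_le [CompleteSpace E] {F : E → ℝ} {L : ℝ}
    (hF : Differentiable ℝ F)
    (hLip : ∀ x y, ‖gradient F x - gradient F y‖ ≤ L * ‖x - y‖) (x y : E) :
    |F y - F x - ⟪gradient F x, y - x⟫| ≤ L * ‖y - x‖ ^ 2 := by
  have hfderiv : ∀ z, fderiv ℝ F z = InnerProductSpace.toDual ℝ E (gradient F z) := fun z =>
    ((InnerProductSpace.toDual ℝ E).apply_symm_apply _).symm
  have hLxy : 0 ≤ L * ‖y - x‖ := by
    rw [← norm_sub_rev]; exact (norm_nonneg _).trans (hLip x y)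
  have bound : ∀ z ∈ segment ℝ x y,
      ‖fderiv ℝ F z - InnerProductSpace.toDual ℝ E (gradient F x)‖ ≤ L * ‖y - x‖ := by
    rintro z ⟨a, b, ha, hb, hab, rfl⟩
    have hzx : a • x + b • y - x = b • (y - x) := by
      rw [eq_sub_of_add_eq hab]; module
    rw [hfderiv, ← map_sub, LinearIsometryEquiv.norm_map]
    calc ‖gradient F (a • x + b • y) - gradient F x‖ ≤ L * ‖a • x + b • y - x‖ := hLip _ _
      _ = b * (L * ‖y - x‖) := by
        rw [hzx, norm_smul, Real.norm_of_nonneg hb]; ring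
      _ ≤ L * ‖y - x‖ := mul_le_of_le_one_left hLxy (by linarith)
  have h := (convex_segment x y).norm_image_sub_le_of_norm_fderiv_le' (fun z _ => hF z) bound
    (left_mem_segment ℝ x y) (right_mem_segment ℝ x y)
  rw [InnerProductSpace.toDual_apply_apply, Real.norm_eq_abs] at h
  linarith

variable (E) in
noncomputable def stdGaussianPDF (z : E) : ℝ :=
  (2 * π) ^ (-(Module.finrank ℝ E : ℝ) / 2) * exp (-‖z‖ ^ 2 / 2)

lemma stdGaussianPDF_nonneg (z : E) : 0 ≤ stdGaussianPDF E z := by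
  unfold stdGaussianPDF; positivity

@[fun_prop]
lemma continuous_stdGaussianPDF : Continuous (stdGaussianPDF E) := by
  unfold stdGaussianPDF; fun_prop

variable [FiniteDimensional ℝ E] [MeasurableSpace E] [BorelSpace E]

lemma integral_stdGaussianPDF : ∫ z, stdGaussianPDF E z = 1 := by
  have h := GaussianFourier.integral_rexp_neg_mul_sq_norm (V := E) (b := 1 / 2) (by norm_num)
  simp only [stdGaussianPDF, integral_const_mul]
  rw [show (π / (1 / 2)) = 2 * π by ring] at h
  rw [show (fun z : E => exp (-‖z‖ ^ 2 / 2)) = fun z => exp (-(1 / 2) * ‖z‖ ^ 2) by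
    ext; ring_nf, h, ← rpow_add (by positivity)]
  ring_nf; exact rpow_zero _

lemma charFun_withDensity_stdGaussianPDF (t : E) :
    charFun (volume.withDensity fun z => ENNReal.ofReal (stdGaussianPDF E z)) t =
      Complex.exp (-‖t‖ ^ 2 / 2) := by
  rw [charFun_apply, integral_withDensity_eq_integral_toReal_smul (by fun_prop)
    (ae_of_all _ fun _ => ENNReal.ofReal_lt_top)]
  simp_rw [ENNReal.toReal_ofReal (stdGaussianPDF_nonneg _), stdGaussianPDF]
  have hpt : ∀ z : E, ((2 * π) ^ (-(Module.finrank ℝ E : ℝ) / 2) * exp (-‖z‖ ^ 2 / 2)) •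
      Complex.exp (⟪z, t⟫ * Complex.I) = (2 * π : ℂ) ^ (-(Module.finrank ℝ E : ℂ) / 2) *
        Complex.exp (-(1 / 2) * ‖z‖ ^ 2 + Complex.I * ⟪t, z⟫) := fun z => by
    rw [Complex.real_smul, Complex.ofReal_mul, Complex.ofReal_cpow (by positivity),
      Complex.ofReal_exp, mul_assoc, ← Complex.exp_add, real_inner_comm]
    push_cast; ring_nf
  have h2π : (2 * π : ℂ) ≠ 0 := by exact_mod_cast (by positivity : (2 * π : ℝ) ≠ 0)
  simp_rw [hpt, integral_const_mul,
    GaussianFourier.integral_cexp_neg_mul_sq_norm_add (by norm_num : 0 < (1 / 2 : ℂ).re),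
    show (π : ℂ) / (1 / 2) = 2 * π by ring, ← mul_assoc, ← Complex.cpow_add _ _ h2π]
  rw [neg_div, neg_add_cancel, Complex.cpow_zero, one_mul, Complex.I_sq]
  ring_nf

lemma withDensity_stdGaussianPDF :
    volume.withDensity (fun z => ENNReal.ofReal (stdGaussianPDF E z)) = stdGaussian E := by
  have := isFiniteMeasure_withDensity_ofReal
    (integrable_of_integral_eq_one (integral_stdGaussianPDF (E := E))).hasFiniteIntegral
  exact Measure.ext_of_charFun (funext fun t => by
    rw [charFun_withDensity_stdGaussianPDF, charFun_stdGaussian])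

lemma integral_stdGaussianPDF_mul (f : E → ℝ) :
    ∫ z, stdGaussianPDF E z * f z = ∫ z, f z ∂stdGaussian E := by
  rw [← withDensity_stdGaussianPDF, integral_withDensity_eq_integral_toReal_smul (by fun_prop)
    (ae_of_all _ fun _ => ENNReal.ofReal_lt_top)]
  simp_rw [ENNReal.toReal_ofReal (stdGaussianPDF_nonneg _), smul_eq_mul]

lemma integral_inner_stdGaussian (x : E) : ∫ z, ⟪x, z⟫ ∂stdGaussian E = 0 :=
  integral_strongDual_stdGaussian (innerSL ℝ x)

lemma integrable_inner_stdGaussian (x : E) :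
    Integrable (fun z => ⟪x, z⟫) (stdGaussian E) :=
  IsGaussian.integrable_id.const_inner x

lemma integrable_norm_sq_stdGaussian : Integrable (fun z : E => ‖z‖ ^ 2) (stdGaussian E) :=
  IsGaussian.memLp_two_id.integrable_norm_pow two_ne_zero

lemma integral_inner_sq_stdGaussian (x : E) :
    ∫ z, ⟪x, z⟫ ^ 2 ∂stdGaussian E = ‖x‖ ^ 2 := by
  have h := covarianceBilin_apply (μ := stdGaussian E) IsGaussian.memLp_two_id x x
  rw [covarianceBilin_stdGaussian, innerSL_apply_apply, real_inner_self_eq_norm_sq] at h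
  simpa [sq] using h.symm

lemma integral_norm_sq_stdGaussian :
    ∫ z, ‖z‖ ^ 2 ∂stdGaussian E = Module.finrank ℝ E := by
  set b := stdOrthonormalBasis ℝ E
  have hint : ∀ i, Integrable (fun z : E => ⟪b i, z⟫ ^ 2) (stdGaussian E) := fun i =>
    (IsGaussian.memLp_two_id.const_inner (b i)).integrable_sq
  simp_rw [← b.sum_sq_inner_right]
  rw [integral_finsetSum _ fun i _ => hint i]
  simp [integral_inner_sq_stdGaussian, b.orthonormal.1]

lemma integrable_inner_add_smul_stdGaussian (g w : E) (s : ℝ) :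
    Integrable (fun z => ⟪g, w + s • z⟫) (stdGaussian E) := by
  simp_rw [inner_add_right, real_inner_smul_right]
  exact (integrable_const _).add ((integrable_inner_stdGaussian g).const_mul s)

lemma integral_inner_add_smul_stdGaussian (g w : E) (s : ℝ) :
    ∫ z, ⟪g, w + s • z⟫ ∂stdGaussian E = ⟪g, w⟫ := by
  simp_rw [inner_add_right, real_inner_smul_right]
  rw [integral_add (integrable_const _) ((integrable_inner_stdGaussian g).const_mul s),
    integral_const_mul, integral_inner_stdGaussian]
  simp

lemma integrable_norm_add_smul_sq_stdGaussian (w : E) (s : ℝ) :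
    Integrable (fun z => ‖w + s • z‖ ^ 2) (stdGaussian E) := by
  simp_rw [norm_add_smul_sq]
  exact ((integrable_const _).add ((integrable_inner_stdGaussian w).const_mul _)).add
    (integrable_norm_sq_stdGaussian.const_mul _)

lemma integral_norm_add_smul_sq_stdGaussian (w : E) (s : ℝ) :
    ∫ z, ‖w + s • z‖ ^ 2 ∂stdGaussian E = ‖w‖ ^ 2 + s ^ 2 * Module.finrank ℝ E := by
  have hlin : Integrable (fun z => ‖w‖ ^ 2 + 2 * s * ⟪w, z⟫) (stdGaussian E) :=
    (integrable_const _).add ((integrable_inner_stdGaussian w).const_mul _)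
  simp_rw [norm_add_smul_sq]
  rw [integral_add hlin (integrable_norm_sq_stdGaussian.const_mul _),
    integral_add (integrable_const _) ((integrable_inner_stdGaussian w).const_mul _),
    integral_const_mul, integral_const_mul, integral_inner_stdGaussian,
    integral_norm_sq_stdGaussian]
  simp

theorem integral_comp_add_smul_stdGaussian_le {F : E → ℝ} {L : ℝ} (hF : Differentiable ℝ F)
    (hLip : ∀ x y, ‖gradient F x - gradient F y‖ ≤ L * ‖x - y‖) (x y : E) (s : ℝ) :
    ∫ z, F (y + s • z) ∂stdGaussian E
      ≤ F x + ⟪gradient F x, y - x⟫ + L * (‖y - x‖ ^ 2 + s ^ 2 * Module.finrank ℝ E) := by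
  set g := gradient F x
  have hFc := hF.continuous
  have haff : Integrable (fun z => F x + ⟪g, (y - x) + s • z⟫) (stdGaussian E) :=
    (integrable_const _).add (integrable_inner_add_smul_stdGaussian g (y - x) s)
  have hquad := (integrable_norm_add_smul_sq_stdGaussian (y - x) s).const_mul L
  have hmodel : ∀ z, |F (y + s • z) - (F x + ⟪g, (y - x) + s • z⟫)|
      ≤ L * ‖(y - x) + s • z‖ ^ 2 := fun z => by
    rw [← sub_sub, show (y - x) + s • z = y + s • z - x by abel]
    exact abs_sub_sub_inner_gradient_le hF hLip x _
  have hint : Integrable (fun z => F (y + s • z)) (stdGaussian E) := by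
    have hrem : Integrable (fun z => F (y + s • z) - (F x + ⟪g, (y - x) + s • z⟫))
        (stdGaussian E) :=
      hquad.mono' (by fun_prop : Continuous _).aestronglyMeasurable (ae_of_all _ hmodel)
    exact (hrem.add haff).congr (ae_of_all _ fun z => by simp)
  calc ∫ z, F (y + s • z) ∂stdGaussian E
      ≤ ∫ z, F x + ⟪g, (y - x) + s • z⟫ + L * ‖(y - x) + s • z‖ ^ 2 ∂stdGaussian E :=
        integral_mono hint (haff.add hquad) fun z => by linarith [(abs_le.mp (hmodel z)).2]
    _ = F x + ⟪g, y - x⟫ + L * (‖y - x‖ ^ 2 + s ^ 2 * Module.finrank ℝ E) := by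
      rw [integral_add haff hquad, integral_add (integrable_const _)
          (integrable_inner_add_smul_stdGaussian g (y - x) s), integral_const_mul,
        integral_inner_add_smul_stdGaussian, integral_norm_add_smul_sq_stdGaussian]
      simp

end

theorem stmt3_general (d : ℕ) (F : EuclideanSpace ℝ (Fin d) → ℝ) (L γ h : ℝ)
    (hγ : 0 < γ) (hh : 0 < h) (hLh : L * h ≤ 1 / 2)
    (hdiff : ContDiff ℝ 1 F)
    (hLip : ∀ x y, ‖gradient F x - gradient F y‖ ≤ L * ‖x - y‖)
    (Y : EuclideanSpace ℝ (Fin d)) :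
    (∫ z : EuclideanSpace ℝ (Fin d),
        ((2 * π) ^ (-(d : ℝ) / 2) * Real.exp (-‖z‖ ^ 2 / 2)) *
          F (Y - h • gradient F Y + Real.sqrt (2 * γ * h) • z))
      ≤ F Y - h / 2 * ‖gradient F Y‖ ^ 2 + 2 * γ * L * h * d := by
  set g := gradient F Y
  have hρ : ∀ z, (2 * π) ^ (-(d : ℝ) / 2) * Real.exp (-‖z‖ ^ 2 / 2) =
      stdGaussianPDF (EuclideanSpace ℝ (Fin d)) z := by simp [stdGaussianPDF]
  simp_rw [hρ, integral_stdGaussianPDF_mul]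
  have hstep := integral_comp_add_smul_stdGaussian_le (hdiff.differentiable one_ne_zero) hLip
    Y (Y - h • g) (Real.sqrt (2 * γ * h))
  rw [finrank_euclideanSpace_fin, sq_sqrt (by positivity), sub_sub_cancel_left, inner_neg_right,
    real_inner_smul_right, real_inner_self_eq_norm_sq, norm_neg, norm_smul, mul_pow,
    Real.norm_of_nonneg hh.le] at hstep
  refine hstep.trans ?_
  nlinarith [mul_nonneg (mul_nonneg hh.le (sq_nonneg ‖g‖)) (sub_nonneg.2 hLh)]

/-- One Langevin step: the expected function value under a standard Gaussian noise
Z ∼ N(0, I_d) satisfies E[F(Y')] ≤ F(Y) - (h/2)‖∇F(Y)‖² + 2γLhd. -/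
theorem stmt3 (d : ℕ) (F : EuclideanSpace ℝ (Fin d) → ℝ) (L γ h : ℝ)
    (hL : 0 < L) (hγ : 0 < γ) (hh : 0 < h) (hLh : L * h ≤ 1 / 2)
    (hdiff : ContDiff ℝ 1 F)
    (hLip : ∀ x y, ‖gradient F x - gradient F y‖ ≤ L * ‖x - y‖)
    (Y : EuclideanSpace ℝ (Fin d)) :
    (∫ z : EuclideanSpace ℝ (Fin d),
        ((2 * π) ^ (-(d : ℝ) / 2) * Real.exp (-‖z‖ ^ 2 / 2)) *
          F (Y - h • gradient F Y + Real.sqrt (2 * γ * h) • z))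
      ≤ F Y - h / 2 * ‖gradient F Y‖ ^ 2 + 2 * γ * L * h * d :=
  stmt3_general d F L γ h hγ hh hLh hdiff hLip Y
end

section
/- Let F : ℝ^d → ℝ have L-Lipschitz gradient and satisfy the coercivity bound ‖∇F(x)‖² ≥ λ_c F(x) - M_c. Suppose Lh ≤ 1/2 and 0 < η ≤ 1/(8γ). Let V(x) = exp(η F(x)) and let Y' = Y - h∇F(Y) + √(2γh)Z with Z ∼ N(0, I_d). Then E[V(Y')] ≤ exp(-(η h λ_c / 4) F(Y) + η h C_V) · V(Y), where C_V = M_c/4 + 4γLd. -/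
/-!
By the descent lemma for the `L`-smooth `F`, the exponent `η F(Y - h ∇F(Y) + √(2γh) z)` is at most
a quadratic polynomial in `z` whose leading coefficient `β = 2ηγLh` is at most `1/8`. The
expectation of the exponential of such a polynomial under the standard Gaussian is explicit:
`E[exp(β‖Z‖² + ⟪w, Z⟫)] = (1 - 2β)^(-d/2) exp(‖w‖² / (2(1 - 2β)))`. The determinant factor is at
most `exp(4ηγLhd)`, and because `ηγ ≤ 1/8` and `Lh ≤ 1/2` the noise term `‖w‖² / (2(1 - 2β))`
uses up at most a third of the gradient decrease `ηh(1 - Lh)‖∇F(Y)‖²`; coercivity turns the rest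
into `-(ηhλ_c/4) F(Y) + ηhM_c/4`.
-/

open Real MeasureTheory Set Module
open scoped RealInnerProductSpace

theorem inv_one_sub_le_exp_two_mul {t : ℝ} (ht0 : 0 ≤ t) (ht : t ≤ 1 / 2) :
    (1 - t)⁻¹ ≤ rexp (2 * t) := by
  rw [inv_le_comm₀ (by linarith) (exp_pos _), ← exp_neg]
  calc rexp (-(2 * t)) = (rexp (2 * t))⁻¹ := exp_neg _
    _ ≤ (1 + 2 * t)⁻¹ := inv_anti₀ (by linarith) (by linarith [add_one_le_exp (2 * t)])
    _ ≤ 1 - t := by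
        rw [inv_le_iff_one_le_mul₀ (by linarith)]
        nlinarith

theorem one_sub_rpow_neg_le_exp {t x : ℝ} (ht0 : 0 ≤ t) (ht : t ≤ 1 / 2) (hx : 0 ≤ x) :
    (1 - t) ^ (-x) ≤ rexp (2 * t * x) := by
  rw [rpow_neg (by linarith), ← inv_rpow (by linarith), exp_mul]
  exact rpow_le_rpow (inv_nonneg.mpr (by linarith)) (inv_one_sub_le_exp_two_mul ht0 ht) hx

section Smooth

variable {E : Type*} [NormedAddCommGroup E] [InnerProductSpace ℝ E]

theorem norm_sub_sq_le (x y : E) : ‖x - y‖ ^ 2 ≤ 2 * ‖x‖ ^ 2 + 2 * ‖y‖ ^ 2 := by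
  nlinarith [norm_sub_sq_real x y, norm_add_sq_real x y, sq_nonneg ‖x + y‖]

variable [CompleteSpace E] {F : E → ℝ} {L : ℝ}

theorem le_add_inner_gradient_add_of_lipschitz_gradient (hF : Differentiable ℝ F)
    (hLip : ∀ x y, ‖gradient F x - gradient F y‖ ≤ L * ‖x - y‖) (x v : E) :
    F (x + v) ≤ F x + ⟪gradient F x, v⟫ + L / 2 * ‖v‖ ^ 2 := by
  set φ : ℝ → ℝ := fun t ↦ F (x + t • v) - t * ⟪gradient F x, v⟫ - L / 2 * ‖v‖ ^ 2 * t ^ 2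
  have hφ : ∀ t, HasDerivAt φ
      (⟪gradient F (x + t • v), v⟫ - ⟪gradient F x, v⟫ - L * ‖v‖ ^ 2 * t) t := by
    intro t
    have hline : HasDerivAt (fun t : ℝ ↦ x + t • v) v t := by
      simpa using ((hasDerivAt_id t).smul_const v).const_add x
    have hFline : HasDerivAt (fun t : ℝ ↦ F (x + t • v)) ⟪gradient F (x + t • v), v⟫ t :=
      (hF _).hasGradientAt.hasFDerivAt.comp_hasDerivAt t hline
    have hlin : HasDerivAt (fun t : ℝ ↦ t * ⟪gradient F x, v⟫) ⟪gradient F x, v⟫ t := by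
      simpa using (hasDerivAt_id t).mul_const ⟪gradient F x, v⟫
    have hquad : HasDerivAt (fun t : ℝ ↦ L / 2 * ‖v‖ ^ 2 * t ^ 2) (L * ‖v‖ ^ 2 * t) t :=
      ((hasDerivAt_pow 2 t).const_mul _).congr_deriv (by push_cast; ring)
    exact (hFline.sub hlin).sub hquad
  have hφ_nonpos : ∀ t ∈ interior (Ici (0 : ℝ)),
      ⟪gradient F (x + t • v), v⟫ - ⟪gradient F x, v⟫ - L * ‖v‖ ^ 2 * t ≤ 0 := by
    intro t ht
    rw [interior_Ici, mem_Ioi] at ht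
    rw [sub_nonpos]
    calc ⟪gradient F (x + t • v), v⟫ - ⟪gradient F x, v⟫
        = ⟪gradient F (x + t • v) - gradient F x, v⟫ := (inner_sub_left _ _ _).symm
      _ ≤ ‖gradient F (x + t • v) - gradient F x‖ * ‖v‖ := real_inner_le_norm _ _
      _ ≤ L * ‖t • v‖ * ‖v‖ := by
          gcongr
          simpa using hLip (x + t • v) x
      _ = L * ‖v‖ ^ 2 * t := by rw [norm_smul, norm_of_nonneg ht.le]; ring
  have hφ_anti := antitoneOn_of_hasDerivWithinAt_nonpos (convex_Ici 0)
    (fun t _ ↦ (hφ t).continuousAt.continuousWithinAt) (fun t _ ↦ (hφ t).hasDerivWithinAt)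
    hφ_nonpos self_mem_Ici (mem_Ici.mpr zero_le_one) zero_le_one
  simp only [φ, zero_smul, add_zero, one_smul, zero_mul, sub_zero, one_mul, one_pow, mul_one,
    ne_eq, OfNat.ofNat_ne_zero, not_false_eq_true, zero_pow, mul_zero] at hφ_anti
  linarith

theorem le_sub_smul_gradient_add_smul_of_lipschitz_gradient (hF : Differentiable ℝ F)
    (hLip : ∀ x y, ‖gradient F x - gradient F y‖ ≤ L * ‖x - y‖) (hL : 0 ≤ L) (x z : E) (h s : ℝ) :
    F (x - h • gradient F x + s • z) ≤
      F x - h * (1 - L * h) * ‖gradient F x‖ ^ 2 + s * ⟪gradient F x, z⟫ + L * s ^ 2 * ‖z‖ ^ 2 := by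
  have hdescent :=
    le_add_inner_gradient_add_of_lipschitz_gradient hF hLip x (s • z - h • gradient F x)
  have hsq := mul_le_mul_of_nonneg_left (norm_sub_sq_le (s • z) (h • gradient F x))
    (by positivity : 0 ≤ L / 2)
  rw [show x + (s • z - h • gradient F x) = x - h • gradient F x + s • z by abel,
    inner_sub_right, real_inner_smul_right, real_inner_smul_right, real_inner_self_eq_norm_sq]
    at hdescent
  rw [norm_smul, norm_smul, mul_pow, mul_pow, norm_eq_abs, norm_eq_abs, sq_abs, sq_abs] at hsq
  linarith

end Smooth

section Gaussian

variable {V : Type*} [NormedAddCommGroup V] [InnerProductSpace ℝ V] [FiniteDimensional ℝ V]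
  [MeasurableSpace V] [BorelSpace V]

theorem integrable_exp_neg_mul_sq_norm_add_inner {b : ℝ} (hb : 0 < b) (w : V) :
    Integrable (fun v : V ↦ rexp (-b * ‖v‖ ^ 2 + ⟪w, v⟫)) := by
  refine (GaussianFourier.integrable_cexp_neg_mul_sq_norm_add (b := b) (by simpa) 1 w).norm.congr
    (ae_of_all _ fun v ↦ ?_)
  simp [Complex.norm_exp, ← Complex.ofReal_pow]

theorem integral_exp_neg_mul_sq_norm_add_inner {b : ℝ} (hb : 0 < b) (w : V) :
    ∫ v : V, rexp (-b * ‖v‖ ^ 2 + ⟪w, v⟫) =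
      (π / b) ^ (finrank ℝ V / 2 : ℝ) * rexp (‖w‖ ^ 2 / (4 * b)) := by
  have h := GaussianFourier.integral_cexp_neg_mul_sq_norm_add (V := V) (b := b) (by simpa) 1 w
  rw [← Complex.ofReal_inj, ← integral_complex_ofReal]
  push_cast
  simp only [one_mul, one_pow] at h
  convert h using 2
  rw [Complex.ofReal_cpow (by positivity)]
  push_cast
  rfl

theorem integral_gaussian_mul_exp_le {f : V → ℝ} {a β : ℝ} (w : V) (hβ : β < 1 / 2)
    (hf : ∀ z, f z ≤ a + β * ‖z‖ ^ 2 + ⟪w, z⟫) :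
    ∫ z : V, ((2 * π) ^ (-(finrank ℝ V : ℝ) / 2) * rexp (-‖z‖ ^ 2 / 2)) * rexp (f z)
      ≤ (1 - 2 * β) ^ (-(finrank ℝ V : ℝ) / 2) * rexp (a + ‖w‖ ^ 2 / (2 * (1 - 2 * β))) := by
  set n := (finrank ℝ V : ℝ)
  set b := 1 / 2 - β
  have hb : 0 < b := sub_pos.mpr hβ
  have hpt : ∀ z : V, ((2 * π) ^ (-n / 2) * rexp (-‖z‖ ^ 2 / 2)) * rexp (f z)
      ≤ (2 * π) ^ (-n / 2) * rexp a * rexp (-b * ‖z‖ ^ 2 + ⟪w, z⟫) := by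
    intro z
    rw [mul_assoc, mul_assoc, ← exp_add, ← exp_add]
    refine mul_le_mul_of_nonneg_left (exp_le_exp.mpr ?_) (by positivity)
    simp only [b]
    linarith [hf z]
  calc _ ≤ ∫ z : V, (2 * π) ^ (-n / 2) * rexp a * rexp (-b * ‖z‖ ^ 2 + ⟪w, z⟫) :=
        integral_mono_of_nonneg (ae_of_all _ fun z ↦ by positivity)
          ((integrable_exp_neg_mul_sq_norm_add_inner hb w).const_mul _) (ae_of_all _ hpt)
    _ = (2 * π) ^ (-n / 2) * (π / b) ^ (n / 2) * rexp a * rexp (‖w‖ ^ 2 / (4 * b)) := by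
        rw [integral_const_mul, integral_exp_neg_mul_sq_norm_add_inner hb]; ring
    _ = _ := by
        have hconst : (2 * π) ^ (-n / 2) * (π / b) ^ (n / 2) = (1 - 2 * β) ^ (-n / 2) := by
          rw [neg_div, rpow_neg (by positivity), inv_mul_eq_div, ← div_rpow (by positivity)
            (by positivity), rpow_neg (by linarith), ← inv_rpow (by linarith)]
          congr 1
          simp only [b]
          field_simp
        rw [hconst, exp_add]
        simp only [b]
        ring_nf

theorem integral_gaussian_mul_exp_langevin_step_le {F : V → ℝ} {L γ h η lamc Mc : ℝ}
    (hL : 0 ≤ L) (hγ : 0 < γ) (hh : 0 ≤ h) (hLh : L * h ≤ 1 / 2)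
    (hη0 : 0 ≤ η) (hη : η ≤ 1 / (8 * γ)) (hF : Differentiable ℝ F)
    (hLip : ∀ x y, ‖gradient F x - gradient F y‖ ≤ L * ‖x - y‖)
    (hcoercive : ∀ x, ‖gradient F x‖ ^ 2 ≥ lamc * F x - Mc) (Y : V) :
    ∫ z : V, ((2 * π) ^ (-(finrank ℝ V : ℝ) / 2) * rexp (-‖z‖ ^ 2 / 2)) *
        rexp (η * F (Y - h • gradient F Y + √(2 * γ * h) • z))
      ≤ rexp (-(η * h * lamc / 4) * F Y + η * h * (Mc / 4 + 4 * γ * L * finrank ℝ V)) *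
          rexp (η * F Y) := by
  set n := (finrank ℝ V : ℝ)
  set g := gradient F Y
  set s := √(2 * γ * h)
  set β := η * L * (2 * γ * h)
  have hs : s ^ 2 = 2 * γ * h := sq_sqrt (by positivity)
  have hηγ : η * γ ≤ 1 / 8 := by
    rw [le_div_iff₀ (by positivity)] at hη; linarith
  have hβ : 2 * β ≤ 1 / 4 := by nlinarith [mul_le_mul hηγ hLh (by positivity) (by norm_num)]
  have hstep : ∀ z, η * F (Y - h • g + s • z) ≤
      (η * F Y - η * h * (1 - L * h) * ‖g‖ ^ 2) + β * ‖z‖ ^ 2 + ⟪(η * s) • g, z⟫ := by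
    intro z
    have := mul_le_mul_of_nonneg_left
      (le_sub_smul_gradient_add_smul_of_lipschitz_gradient hF hLip hL Y z h s) hη0
    rw [hs] at this
    rw [real_inner_smul_left]
    linarith
  refine (integral_gaussian_mul_exp_le ((η * s) • g) (by linarith) hstep).trans ?_
  have hdim := one_sub_rpow_neg_le_exp (t := 2 * β) (x := n / 2) (by positivity) (by linarith)
    (by positivity)
  have hg : 0 ≤ η * h * ‖g‖ ^ 2 := by positivity
  have hnoise : ‖(η * s) • g‖ ^ 2 / (2 * (1 - 2 * β)) ≤ η * h / 6 * ‖g‖ ^ 2 := by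
    rw [norm_smul, mul_pow, norm_eq_abs, sq_abs, mul_pow, hs, div_le_iff₀ (by linarith)]
    nlinarith [mul_le_mul_of_nonneg_right hηγ hg, mul_le_mul_of_nonneg_right hβ hg]
  have hcoer : -(η * h / 4) * ‖g‖ ^ 2 ≤ -(η * h * lamc / 4) * F Y + η * h * (Mc / 4) := by
    nlinarith [mul_le_mul_of_nonneg_left (hcoercive Y) (by positivity : 0 ≤ η * h / 4)]
  calc _ ≤ rexp (2 * (2 * β) * (n / 2)) * rexp (η * F Y - η * h / 4 * ‖g‖ ^ 2) := by
        rw [neg_div]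
        gcongr
        linarith [mul_le_mul_of_nonneg_left hLh hg]
    _ ≤ _ := by
        rw [← exp_add, ← exp_add]
        exact exp_le_exp.mpr (by linarith)

end Gaussian

theorem stmt4_general (d : ℕ) (F : EuclideanSpace ℝ (Fin d) → ℝ) (L γ h η lamc Mc : ℝ)
    (hL : 0 < L) (hγ : 0 < γ) (hh : 0 < h) (hLh : L * h ≤ 1 / 2)
    (hη0 : 0 < η) (hη : η ≤ 1 / (8 * γ))
    (hdiff : ContDiff ℝ 1 F)
    (hLip : ∀ x y, ‖gradient F x - gradient F y‖ ≤ L * ‖x - y‖)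
    (hcoercive : ∀ x, ‖gradient F x‖ ^ 2 ≥ lamc * F x - Mc)
    (Y : EuclideanSpace ℝ (Fin d)) :
    (∫ z : EuclideanSpace ℝ (Fin d),
        ((2 * π) ^ (-(d : ℝ) / 2) * Real.exp (-‖z‖ ^ 2 / 2)) *
          Real.exp (η * F (Y - h • gradient F Y + Real.sqrt (2 * γ * h) • z)))
      ≤ Real.exp (-(η * h * lamc / 4) * F Y + η * h * (Mc / 4 + 4 * γ * L * d)) *
          Real.exp (η * F Y) := by
  simpa only [finrank_euclideanSpace_fin] using integral_gaussian_mul_exp_langevin_step_le hL.le hγ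
    hh.le hLh hη0.le hη (hdiff.differentiable one_ne_zero) hLip hcoercive Y

/-- Exponential Lyapunov drift for one Langevin step:
E[V(Y')] ≤ exp(-(ηhλ_c/4)F(Y) + ηhC_V) V(Y) where V(x) = exp(ηF(x)) and
C_V = M_c/4 + 4γLd. -/
theorem stmt4 (d : ℕ) (F : EuclideanSpace ℝ (Fin d) → ℝ) (L γ h η lamc Mc : ℝ)
    (hL : 0 < L) (hγ : 0 < γ) (hh : 0 < h) (hLh : L * h ≤ 1 / 2)
    (hη0 : 0 < η) (hη : η ≤ 1 / (8 * γ))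
    (hlamc : 0 < lamc) (hMc : 0 < Mc)
    (hdiff : ContDiff ℝ 1 F)
    (hLip : ∀ x y, ‖gradient F x - gradient F y‖ ≤ L * ‖x - y‖)
    (hcoercive : ∀ x, ‖gradient F x‖ ^ 2 ≥ lamc * F x - Mc)
    (Y : EuclideanSpace ℝ (Fin d)) :
    (∫ z : EuclideanSpace ℝ (Fin d),
        ((2 * π) ^ (-(d : ℝ) / 2) * Real.exp (-‖z‖ ^ 2 / 2)) *
          Real.exp (η * F (Y - h • gradient F Y + Real.sqrt (2 * γ * h) • z)))
      ≤ Real.exp (-(η * h * lamc / 4) * F Y + η * h * (Mc / 4 + 4 * γ * L * d)) *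
          Real.exp (η * F Y) :=
  stmt4_general d F L γ h η lamc Mc hL hγ hh hLh hη0 hη hdiff hLip hcoercive Y
end

section
/- Let F : ℝ^d → ℝ have L-Lipschitz gradient, be convex on the sublevel set B₀ = {x : F(x) ≤ r₀} (with F(x*) = 0 at the unique minimizer x*), with B₀ ⊆ {‖x - x*‖ ≤ r_u}. Suppose h ≤ min{1/(2L), r_u²/r₀} and X_n ∈ B₀. Then the gradient descent iterates X_{n+k} (defined by X_{j+1} = X_j - h∇F(X_j)) remain in B₀ and satisfy F(X_{n+k}) ≤ 1/(1/r₀ + k h / r_u²) for all k ≥ 0. -/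
/-!
On the sublevel set where `F` is convex, the descent lemma of an `L`-smooth function combines with
the first-order convexity inequality into a one-sided co-coercivity bound, provided the auxiliary
point `y + L⁻¹ • (∇F x - ∇F y)` stays in the sublevel set; the descent lemma itself guarantees this
at the points that occur. For one step `x' = x - h • ∇F x` with `2hL ≤ 1` this yields
`h ⟪∇F x, ∇F x'⟫ ≤ F x - F x'`, `‖∇F x'‖² ≤ ⟪∇F x, ∇F x'⟫` and `F x' ≤ ‖∇F x'‖ r_u - h ‖∇F x'‖²`
(measuring `F` from its minimum). A two-case scalar argument, according to whether
`‖∇F x'‖ r_u ≤ F x`, turns these into `1 / F x' ≥ 1 / F x + h / r_u²`, which telescopes.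
-/

open Set
open scoped Gradient RealInnerProductSpace

variable {E : Type*} [NormedAddCommGroup E] [InnerProductSpace ℝ E] [CompleteSpace E]
  {F : E → ℝ} {L : ℝ}

theorem hasDerivAt_apply_add_smul {x v : E} {u : ℝ} (hF : DifferentiableAt ℝ F (x + u • v)) :
    HasDerivAt (fun s : ℝ => F (x + s • v)) ⟪∇ F (x + u • v), v⟫ u := by
  have hline : HasDerivAt (fun s : ℝ => x + s • v) v u := by
    simpa using ((hasDerivAt_id u).smul_const v).const_add x
  rw [inner_gradient_left]
  exact hF.hasFDerivAt.comp_hasDerivAt u hline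

theorem apply_add_le_of_lipschitz_gradient (hdiff : Differentiable ℝ F)
    (hLip : ∀ x y, ‖∇ F x - ∇ F y‖ ≤ L * ‖x - y‖) (x v : E) :
    F (x + v) ≤ F x + ⟪∇ F x, v⟫ + L / 2 * ‖v‖ ^ 2 := by
  have hφ (u : ℝ) := hasDerivAt_apply_add_smul (x := x) (v := v) (u := u) (hdiff _)
  have hB (u : ℝ) : HasDerivAt (fun s : ℝ => F x + s * ⟪∇ F x, v⟫ + L / 2 * s ^ 2 * ‖v‖ ^ 2)
      (⟪∇ F x, v⟫ + L * u * ‖v‖ ^ 2) u :=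
    ((((hasDerivAt_id u).mul_const ⟪∇ F x, v⟫).const_add (F x)).add
      (((hasDerivAt_pow 2 u).const_mul (L / 2)).mul_const (‖v‖ ^ 2))).congr_deriv
      (by push_cast; ring)
  have key := image_le_of_deriv_right_le_deriv_boundary (a := 0) (b := 1)
    (fun u _ => (hφ u).continuousAt.continuousWithinAt) (fun u _ => (hφ u).hasDerivWithinAt)
    (by simp) (fun u _ => (hB u).continuousAt.continuousWithinAt)
    (fun u _ => (hB u).hasDerivWithinAt) (fun u hu => ?_) (right_mem_Icc.2 zero_le_one)
  · simpa using key
  calc ⟪∇ F (x + u • v), v⟫ = ⟪∇ F x, v⟫ + ⟪∇ F (x + u • v) - ∇ F x, v⟫ := by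
        rw [inner_sub_left]; ring
    _ ≤ ⟪∇ F x, v⟫ + ‖∇ F (x + u • v) - ∇ F x‖ * ‖v‖ := by gcongr; exact real_inner_le_norm _ _
    _ ≤ ⟪∇ F x, v⟫ + L * ‖(x + u • v) - x‖ * ‖v‖ := by gcongr; exact hLip _ _
    _ = ⟪∇ F x, v⟫ + L * u * ‖v‖ ^ 2 := by
        rw [add_sub_cancel_left, norm_smul, Real.norm_of_nonneg hu.1]; ring

theorem ConvexOn.add_inner_gradient_le {s : Set E} (hconv : ConvexOn ℝ s F) {x y : E}
    (hF : DifferentiableAt ℝ F x) (hx : x ∈ s) (hy : y ∈ s) :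
    F x + ⟪∇ F x, y - x⟫ ≤ F y := by
  have hline : F ∘ AffineMap.lineMap x y = fun u : ℝ => F (x + u • (y - x)) := by
    funext u; simp [AffineMap.lineMap_apply_module', add_comm]
  have hφ := hconv.comp_affineMap (AffineMap.lineMap x y)
  rw [hline] at hφ
  have hderiv := hasDerivAt_apply_add_smul (x := x) (v := y - x) (u := 0) (by simpa using hF)
  have := hφ.le_slope_of_hasDerivWithinAt (x := 0) (y := 1) (by simpa using hx) (by simpa using hy)
    zero_lt_one hderiv.hasDerivWithinAt
  simpa only [slope_def_field, zero_smul, add_zero, one_smul, add_sub_cancel, sub_zero, div_one,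
    le_sub_iff_add_le'] using this

theorem ConvexOn.add_inner_gradient_add_sq_norm_le {s : Set E} (hconv : ConvexOn ℝ s F)
    (hdiff : Differentiable ℝ F) (hLip : ∀ x y, ‖∇ F x - ∇ F y‖ ≤ L * ‖x - y‖) (hL : 0 < L)
    {x y : E} (hx : x ∈ s) (hz : y + L⁻¹ • (∇ F x - ∇ F y) ∈ s) :
    F x + ⟪∇ F x, y - x⟫ + ‖∇ F x - ∇ F y‖ ^ 2 / (2 * L) ≤ F y := by
  set δ := ∇ F x - ∇ F y
  have hconvex := hconv.add_inner_gradient_le (hdiff x) hx hz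
  have hdescent := apply_add_le_of_lipschitz_gradient hdiff hLip y (L⁻¹ • δ)
  rw [show y + L⁻¹ • δ - x = (y - x) + L⁻¹ • δ by abel, inner_add_right,
    real_inner_smul_right] at hconvex
  rw [real_inner_smul_right, norm_smul, Real.norm_of_nonneg (inv_nonneg.2 hL.le)] at hdescent
  have hδ : ⟪∇ F x, δ⟫ - ⟪∇ F y, δ⟫ = ‖δ‖ ^ 2 := by
    rw [← inner_sub_left, real_inner_self_eq_norm_sq]
  have key : L⁻¹ * ⟪∇ F x, δ⟫ - L⁻¹ * ⟪∇ F y, δ⟫ - L / 2 * (L⁻¹ * ‖δ‖) ^ 2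
      = ‖δ‖ ^ 2 / (2 * L) := by
    rw [← mul_sub, hδ]; field_simp; ring
  linarith

theorem apply_add_le_of_norm_add_inv_smul_le (hdiff : Differentiable ℝ F)
    (hLip : ∀ x y, ‖∇ F x - ∇ F y‖ ≤ L * ‖x - y‖) (hL : 0 < L) {x v : E}
    (hv : ‖v + L⁻¹ • ∇ F x‖ ≤ L⁻¹ * ‖∇ F x‖) : F (x + v) ≤ F x := by
  have hdescent := apply_add_le_of_lipschitz_gradient hdiff hLip x v
  have hsq : ‖v + L⁻¹ • ∇ F x‖ ^ 2 ≤ (L⁻¹ * ‖∇ F x‖) ^ 2 := by gcongr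
  rw [norm_add_sq_real, norm_smul, Real.norm_of_nonneg (inv_nonneg.2 hL.le),
    real_inner_smul_right, real_inner_comm] at hsq
  have : ⟪∇ F x, v⟫ + L / 2 * ‖v‖ ^ 2 = L / 2 * (‖v‖ ^ 2 + 2 * (L⁻¹ * ⟪∇ F x, v⟫)) := by
    field_simp; ring
  nlinarith

theorem IsLocalMin.gradient_eq_zero {a : E} (h : IsLocalMin F a) : ∇ F a = 0 := by
  simp [gradient, h.fderiv_eq_zero]

theorem sq_norm_gradient_le (hdiff : Differentiable ℝ F)
    (hLip : ∀ x y, ‖∇ F x - ∇ F y‖ ≤ L * ‖x - y‖) (hL : 0 < L) {xstar : E}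
    (hmin : ∀ y, F xstar ≤ F y) (x : E) : ‖∇ F x‖ ^ 2 ≤ 2 * L * (F x - F xstar) := by
  have hdescent := apply_add_le_of_lipschitz_gradient hdiff hLip x (-(L⁻¹ • ∇ F x))
  rw [inner_neg_right, real_inner_smul_right, real_inner_self_eq_norm_sq, norm_neg, norm_smul,
    Real.norm_of_nonneg (inv_nonneg.2 hL.le)] at hdescent
  have key : L⁻¹ * ‖∇ F x‖ ^ 2 - L / 2 * (L⁻¹ * ‖∇ F x‖) ^ 2 = ‖∇ F x‖ ^ 2 / (2 * L) := by
    field_simp; ring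
  have := hmin (x + -(L⁻¹ • ∇ F x))
  rw [← div_le_iff₀' (by positivity : (0:ℝ) < 2 * L)]
  linarith

theorem apply_add_inv_smul_gradient_le (hdiff : Differentiable ℝ F)
    (hLip : ∀ x y, ‖∇ F x - ∇ F y‖ ≤ L * ‖x - y‖) (hL : 0 < L) {xstar : E}
    (hmin : ∀ y, F xstar ≤ F y) (x : E) : F (xstar + L⁻¹ • ∇ F x) ≤ F x := by
  have hdescent := apply_add_le_of_lipschitz_gradient hdiff hLip xstar (L⁻¹ • ∇ F x)
  rw [(show IsLocalMin F xstar from .of_forall hmin).gradient_eq_zero, inner_zero_left, norm_smul,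
    Real.norm_of_nonneg (inv_nonneg.2 hL.le)] at hdescent
  have key : L / 2 * (L⁻¹ * ‖∇ F x‖) ^ 2 = ‖∇ F x‖ ^ 2 / (2 * L) := by
    field_simp
  have := sq_norm_gradient_le hdiff hLip hL hmin x
  rw [← div_le_iff₀' (by positivity : (0:ℝ) < 2 * L)] at this
  linarith

theorem sub_le_inner_gradient_sub_sq {r : ℝ} (hconv : ConvexOn ℝ {y | F y ≤ r} F)
    (hdiff : Differentiable ℝ F) (hLip : ∀ x y, ‖∇ F x - ∇ F y‖ ≤ L * ‖x - y‖) (hL : 0 < L)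
    {xstar x : E} (hmin : ∀ y, F xstar ≤ F y) (hx : F x ≤ r) :
    F x - F xstar ≤ ⟪∇ F x, x - xstar⟫ - ‖∇ F x‖ ^ 2 / (2 * L) := by
  have hgrad : ∇ F xstar = 0 := (show IsLocalMin F xstar from .of_forall hmin).gradient_eq_zero
  have hz : F (xstar + L⁻¹ • (∇ F x - ∇ F xstar)) ≤ r := by
    rw [hgrad, sub_zero]
    exact (apply_add_inv_smul_gradient_le hdiff hLip hL hmin x).trans hx
  have := hconv.add_inner_gradient_add_sq_norm_le hdiff hLip hL hx hz
  rw [hgrad, sub_zero, ← neg_sub x xstar, inner_neg_right] at this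
  linarith

theorem sub_le_norm_gradient_mul_sub_sq {r ρ : ℝ} (hconv : ConvexOn ℝ {y | F y ≤ r} F)
    (hdiff : Differentiable ℝ F) (hLip : ∀ x y, ‖∇ F x - ∇ F y‖ ≤ L * ‖x - y‖) (hL : 0 < L)
    {xstar x : E} (hmin : ∀ y, F xstar ≤ F y)
    (hball : {y | F y ≤ r} ⊆ Metric.closedBall xstar ρ) (hx : F x ≤ r) :
    F x - F xstar ≤ ‖∇ F x‖ * ρ - ‖∇ F x‖ ^ 2 / (2 * L) := by
  have hdist : ‖x - xstar‖ ≤ ρ := by simpa [dist_eq_norm] using hball hx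
  have hcs : ⟪∇ F x, x - xstar⟫ ≤ ‖∇ F x‖ * ρ :=
    (real_inner_le_norm _ _).trans (by gcongr)
  linarith [sub_le_inner_gradient_sub_sq hconv hdiff hLip hL hmin hx]

theorem apply_sub_smul_gradient_le (hdiff : Differentiable ℝ F)
    (hLip : ∀ x y, ‖∇ F x - ∇ F y‖ ≤ L * ‖x - y‖) (hL : 0 < L) {h : ℝ} (hh : 0 ≤ h)
    (hhL : h * L ≤ 2) (x : E) : F (x - h • ∇ F x) ≤ F x := by
  rw [sub_eq_add_neg]
  apply apply_add_le_of_norm_add_inv_smul_le hdiff hLip hL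
  rw [← neg_smul, ← add_smul, norm_smul, Real.norm_eq_abs]
  have : h ≤ 2 * L⁻¹ := by rw [← div_eq_mul_inv, le_div_iff₀ hL]; exact hhL
  gcongr
  rw [abs_le]
  constructor <;> linarith

theorem mul_inner_gradient_le_sub {r : ℝ} (hconv : ConvexOn ℝ {y | F y ≤ r} F)
    (hdiff : Differentiable ℝ F) (hLip : ∀ x y, ‖∇ F x - ∇ F y‖ ≤ L * ‖x - y‖) (hL : 0 < L)
    {h : ℝ} (hh : 0 ≤ h) (hhL : h * L ≤ 2) {x : E} (hx : F x ≤ r) :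
    h * ⟪∇ F x, ∇ F (x - h • ∇ F x)⟫ ≤ F x - F (x - h • ∇ F x) := by
  have hx' := (apply_sub_smul_gradient_le hdiff hLip hL hh hhL x).trans hx
  have := hconv.add_inner_gradient_le (hdiff _) hx' hx
  rw [sub_sub_cancel, real_inner_smul_right, real_inner_comm] at this
  linarith

theorem sq_norm_sub_gradient_le {r : ℝ} (hconv : ConvexOn ℝ {y | F y ≤ r} F)
    (hdiff : Differentiable ℝ F) (hLip : ∀ x y, ‖∇ F x - ∇ F y‖ ≤ L * ‖x - y‖) (hL : 0 < L)
    {h : ℝ} (hh : 0 ≤ h) (hhL : 2 * h * L ≤ 1) {x : E} (hx : F x ≤ r) :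
    ‖∇ F x - ∇ F (x - h • ∇ F x)‖ ^ 2
      ≤ 2 * L * (h * ⟪∇ F x, ∇ F x - ∇ F (x - h • ∇ F x)⟫) := by
  have hhL' : h * L ≤ 2 := by linarith
  set g := ∇ F x
  set x' := x - h • g
  set δ := g - ∇ F x'
  have hδ : ‖δ‖ ≤ L * h * ‖g‖ := by
    have := hLip x x'
    rwa [sub_sub_cancel, norm_smul, Real.norm_of_nonneg hh, ← mul_assoc] at this
  have hz : F (x' + L⁻¹ • δ) ≤ r := by
    refine le_trans ?_ hx
    rw [show x' + L⁻¹ • δ = x + (L⁻¹ • δ - h • g) by simp only [x']; abel]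
    apply apply_add_le_of_norm_add_inv_smul_le hdiff hLip hL
    rw [sub_add_eq_add_sub, add_sub_assoc, ← sub_smul]
    have hLh : 0 ≤ L⁻¹ - h := by
      rw [sub_nonneg, ← one_div, le_div_iff₀ hL]; linarith
    calc ‖L⁻¹ • δ + (L⁻¹ - h) • g‖ ≤ L⁻¹ * ‖δ‖ + (L⁻¹ - h) * ‖g‖ := by
          refine (norm_add_le _ _).trans_eq ?_
          rw [norm_smul, norm_smul, Real.norm_of_nonneg (inv_nonneg.2 hL.le),
            Real.norm_of_nonneg hLh]
      _ ≤ L⁻¹ * (L * h * ‖g‖) + (L⁻¹ - h) * ‖g‖ := by gcongr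
      _ = L⁻¹ * ‖g‖ := by field_simp; ring
  have hcoco := hconv.add_inner_gradient_add_sq_norm_le hdiff hLip hL hx hz
  have hdec := mul_inner_gradient_le_sub hconv hdiff hLip hL hh hhL' hx
  rw [show x' - x = -(h • g) by simp only [x']; abel, inner_neg_right, real_inner_smul_right,
    real_inner_self_eq_norm_sq] at hcoco
  rw [inner_sub_right, real_inner_self_eq_norm_sq]
  rw [← div_le_iff₀' (by positivity : (0:ℝ) < 2 * L)]
  linarith

theorem sq_norm_gradient_le_inner {r : ℝ} (hconv : ConvexOn ℝ {y | F y ≤ r} F)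
    (hdiff : Differentiable ℝ F) (hLip : ∀ x y, ‖∇ F x - ∇ F y‖ ≤ L * ‖x - y‖) (hL : 0 < L)
    {h : ℝ} (hh : 0 < h) (hhL : 2 * h * L ≤ 1) {x : E} (hx : F x ≤ r) :
    ‖∇ F (x - h • ∇ F x)‖ ^ 2 ≤ ⟪∇ F x, ∇ F (x - h • ∇ F x)⟫ := by
  have hcoco := sq_norm_sub_gradient_le hconv hdiff hLip hL hh.le hhL hx
  set g := ∇ F x
  set g' := ∇ F (x - h • g)
  have hexpand : ⟪g, g'⟫ - ‖g'‖ ^ 2 = ⟪g, g - g'⟫ - ‖g - g'‖ ^ 2 := by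
    rw [← real_inner_self_eq_norm_sq, ← real_inner_self_eq_norm_sq]
    simp only [inner_sub_left, inner_sub_right, real_inner_comm g g']
    ring
  have hnonneg : 0 ≤ ⟪g, g - g'⟫ := by
    nlinarith [sq_nonneg ‖g - g'‖, mul_pos hL hh]
  nlinarith [mul_nonneg hnonneg (by linarith : (0:ℝ) ≤ 1 - 2 * h * L)]

theorem mul_one_add_mul_le_of_le_sub {f f' s t ρ h : ℝ} (hh : 0 ≤ h) (hf : 0 ≤ f) (ht : 0 ≤ t)
    (hρ : 0 < ρ) (hts : t ^ 2 ≤ s) (hdec : h * s ≤ f - f') (hf' : f' ≤ t * ρ - h * t ^ 2) :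
    f' * (1 + h / ρ ^ 2 * f) ≤ f := by
  set a := ρ ^ 2 + h * f
  have ha : 0 ≤ a := by positivity
  suffices h * f ^ 2 ≤ (f - f') * a by
    have e : f' * (1 + h / ρ ^ 2 * f) = f' * a / ρ ^ 2 := by simp only [a]; field_simp
    rw [e, div_le_iff₀ (by positivity)]
    linarith
  rcases le_or_gt (t * ρ) f with hle | hlt
  · have key : h * f ^ 2 ≤ (f - t * ρ + h * t ^ 2) * a := by
      rcases hf.eq_or_lt with rfl | hfpos
      · obtain rfl : t = 0 := le_antisymm (by nlinarith) ht
        simp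
      · -- f · (f - tρ + ht²) a - h f³ = (fρ - t a)² + tρ a (f - tρ)
        refine le_of_mul_le_mul_left ?_ hfpos
        nlinarith [sq_nonneg (f * ρ - t * a),
          mul_nonneg (mul_nonneg (mul_nonneg ht hρ.le) ha) (sub_nonneg.2 hle)]
    calc h * f ^ 2 ≤ (f - t * ρ + h * t ^ 2) * a := key
      _ ≤ (f - f') * a := by gcongr; linarith
  · have hsq : f ^ 2 ≤ s * a :=
      calc f ^ 2 ≤ (t * ρ) ^ 2 := pow_le_pow_left₀ hf hlt.le 2
        _ ≤ t ^ 2 * a := by rw [mul_pow]; gcongr; simp only [a]; nlinarith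
        _ ≤ s * a := by gcongr
    calc h * f ^ 2 ≤ h * (s * a) := by gcongr
      _ ≤ (f - f') * a := by rw [← mul_assoc]; gcongr

theorem le_one_div_add_of_mul_one_add_le {f f' a c : ℝ} (ha : 0 < a) (hc : 0 ≤ c) (hf : 0 ≤ f)
    (hfa : f ≤ 1 / a) (hstep : f' * (1 + c * f) ≤ f) : f' ≤ 1 / (a + c) := by
  rw [le_div_iff₀ ha, mul_comm] at hfa
  rw [le_div_iff₀ (by positivity)]
  refine le_of_mul_le_mul_right ?_ (by positivity : 0 < 1 + c * f)
  calc f' * (a + c) * (1 + c * f) = f' * (1 + c * f) * (a + c) := by ring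
    _ ≤ f * (a + c) := by gcongr
    _ ≤ 1 * (1 + c * f) := by linarith [mul_comm f c]

theorem apply_sub_smul_gradient_sub_mul_le {r ρ h : ℝ} (hconv : ConvexOn ℝ {y | F y ≤ r} F)
    (hdiff : Differentiable ℝ F) (hLip : ∀ x y, ‖∇ F x - ∇ F y‖ ≤ L * ‖x - y‖) (hL : 0 < L)
    (hρ : 0 < ρ) (hh : 0 < h) (hhL : 2 * h * L ≤ 1) {xstar x : E} (hmin : ∀ y, F xstar ≤ F y)
    (hball : {y | F y ≤ r} ⊆ Metric.closedBall xstar ρ) (hx : F x ≤ r) :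
    (F (x - h • ∇ F x) - F xstar) * (1 + h / ρ ^ 2 * (F x - F xstar)) ≤ F x - F xstar := by
  have hx' : F (x - h • ∇ F x) ≤ r :=
    (apply_sub_smul_gradient_le hdiff hLip hL hh.le (by linarith) x).trans hx
  have hdec := mul_inner_gradient_le_sub hconv hdiff hLip hL hh.le (by linarith) hx
  have hval := sub_le_norm_gradient_mul_sub_sq hconv hdiff hLip hL hmin hball hx'
  have hstep : h * ‖∇ F (x - h • ∇ F x)‖ ^ 2 ≤ ‖∇ F (x - h • ∇ F x)‖ ^ 2 / (2 * L) := by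
    rw [le_div_iff₀ (by positivity)]
    nlinarith [sq_nonneg ‖∇ F (x - h • ∇ F x)‖]
  exact mul_one_add_mul_le_of_le_sub hh.le (sub_nonneg.2 (hmin x)) (norm_nonneg _) hρ
    (sq_norm_gradient_le_inner hconv hdiff hLip hL hh hhL hx) (by linarith) (by linarith)

theorem stmt9_general (d : ℕ) (F : EuclideanSpace ℝ (Fin d) → ℝ) (L r₀ ru h : ℝ)
    (xstar : EuclideanSpace ℝ (Fin d)) (X : ℕ → EuclideanSpace ℝ (Fin d))
    (hL : 0 < L) (hr₀ : 0 < r₀) (hru : 0 < ru)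
    (hh : 0 < h) (hh1 : h ≤ 1 / (2 * L))
    (hdiff : Differentiable ℝ F)
    (hLip : ∀ x y, ‖gradient F x - gradient F y‖ ≤ L * ‖x - y‖)
    (hmin : ∀ x, F xstar ≤ F x) (hFstar : F xstar = 0)
    (hconv : ConvexOn ℝ {x : EuclideanSpace ℝ (Fin d) | F x ≤ r₀} F)
    (hB₀ : {x : EuclideanSpace ℝ (Fin d) | F x ≤ r₀} ⊆ Metric.closedBall xstar ru)
    (hX0 : F (X 0) ≤ r₀)
    (hiter : ∀ k : ℕ, X (k + 1) = X k - h • gradient F (X k)) :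
    ∀ k : ℕ, F (X k) ≤ r₀ ∧ F (X k) ≤ 1 / (1 / r₀ + k * h / ru ^ 2) := by
  have hhL : 2 * h * L ≤ 1 := by rw [le_div_iff₀ (by positivity)] at hh1; linarith
  intro k
  induction k with
  | zero => exact ⟨hX0, by simpa using hX0⟩
  | succ k ih =>
    obtain ⟨hk, hbound⟩ := ih
    have hstep := apply_sub_smul_gradient_sub_mul_le hconv hdiff hLip hL hru hh hhL hmin hB₀ hk
    rw [← hiter, hFstar, sub_zero, sub_zero] at hstep
    refine ⟨hiter k ▸ (apply_sub_smul_gradient_le hdiff hLip hL hh.le (by linarith) _).trans hk, ?_⟩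
    rw [Nat.cast_succ, add_mul, one_mul, add_div, ← add_assoc]
    exact le_one_div_add_of_mul_one_add_le (by positivity) (by positivity)
      (hFstar ▸ hmin (X k)) hbound hstep

/-- Sublinear convergence of gradient descent from inside the sublevel set B₀ where F
is convex: F(X_{n+k}) ≤ 1/(1/r₀ + k h / r_u²), and the iterates stay in B₀. -/
theorem stmt9 (d : ℕ) (F : EuclideanSpace ℝ (Fin d) → ℝ) (L r₀ ru h : ℝ)
    (xstar : EuclideanSpace ℝ (Fin d)) (X : ℕ → EuclideanSpace ℝ (Fin d))
    (hL : 0 < L) (hr₀ : 0 < r₀) (hru : 0 < ru)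
    (hh : 0 < h) (hh1 : h ≤ 1 / (2 * L)) (hh2 : h ≤ ru ^ 2 / r₀)
    (hdiff : Differentiable ℝ F)
    (hLip : ∀ x y, ‖gradient F x - gradient F y‖ ≤ L * ‖x - y‖)
    (hmin : ∀ x, F xstar ≤ F x) (hFstar : F xstar = 0)
    (hconv : ConvexOn ℝ {x : EuclideanSpace ℝ (Fin d) | F x ≤ r₀} F)
    (hB₀ : {x : EuclideanSpace ℝ (Fin d) | F x ≤ r₀} ⊆ Metric.closedBall xstar ru)
    (hX0 : F (X 0) ≤ r₀)
    (hiter : ∀ k : ℕ, X (k + 1) = X k - h • gradient F (X k)) :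
    ∀ k : ℕ, F (X k) ≤ r₀ ∧ F (X k) ≤ 1 / (1 / r₀ + k * h / ru ^ 2) :=
  stmt9_general d F L r₀ ru h xstar X hL hr₀ hru hh hh1 hdiff hLip hmin hFstar hconv hB₀ hX0 hiter
end

section
/- Let (V_n)_{n≥0} be a nonnegative stochastic process adapted to a filtration (F_n) with V_n ≥ 1, let τ be the first hitting time of a set, and suppose that on {n < τ} we have E[V_{n+1} | F_n] ≤ e^{-c} V_n for some constant c > 0. Then E[e^{c τ}] ≤ V_0, i.e., τ has a finite exponential moment bounded by the initial Lyapunov value. -/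
/-! The weighted process `W n = e^{c n} V n` satisfies `E[W (n+1) | ℱ n] ≤ W n` on `{n < τ}`,
so the stopped process `W (τ ∧ n)` has expectation at most `E[V 0]`. Since `V ≥ 1`, this bounds
`E[e^{c (τ ∧ n)}]`, and Fatou's lemma lets `n → ∞`. -/

open MeasureTheory Filter

section StoppedProcess

variable {Ω : Type*} {m0 : MeasurableSpace Ω} {μ : Measure Ω} {τ : Ω → ℕ}

lemma measurable_of_isStoppingTime_coe {ℱ : Filtration ℕ m0}
    (hτ : IsStoppingTime ℱ (fun ω => (τ ω : WithTop ℕ))) : Measurable τ :=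
  measurable_to_countable' fun n => ℱ.le n _ (by
    convert hτ.measurableSet_eq n using 1
    ext ω
    simp)

lemma setIntegral_le_of_condExp_le {m : MeasurableSpace Ω} (hm : m ≤ m0)
    [SigmaFinite (μ.trim hm)] {f g : Ω → ℝ} (hf : Integrable f μ) (hg : Integrable g μ)
    {s : Set Ω} (hs : MeasurableSet[m] s) (hfg : ∀ᵐ ω ∂μ, ω ∈ s → μ[f|m] ω ≤ g ω) :
    ∫ ω in s, f ω ∂μ ≤ ∫ ω in s, g ω ∂μ := by
  rw [← setIntegral_condExp hm hf hs]
  exact setIntegral_mono_on_ae integrable_condExp.integrableOn hg.integrableOn (hm s hs) hfg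

lemma stopped_min_succ_eq (W : ℕ → Ω → ℝ) (n : ℕ) (ω : Ω) :
    W (min (τ ω) (n + 1)) ω =
      W (min (τ ω) n) ω + {ω | n < τ ω}.indicator (W (n + 1) - W n) ω := by
  by_cases h : n < τ ω
  · simp [h, Nat.min_eq_right h.le]
  · have h' : τ ω ≤ n := not_lt.mp h
    simp [h, Nat.min_eq_left h', Nat.min_eq_left (h'.trans n.le_succ)]

variable {W : ℕ → Ω → ℝ}

lemma integrable_stopped_min (hτ : Measurable τ) (hW : ∀ n, Integrable (W n) μ) (n : ℕ) :
    Integrable (fun ω => W (min (τ ω) n) ω) μ := by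
  induction n with
  | zero => simpa using hW 0
  | succ n ih =>
    simp_rw [stopped_min_succ_eq W n]
    exact ih.add (((hW (n + 1)).sub (hW n)).indicator (measurableSet_lt measurable_const hτ))

lemma integral_stopped_min_le (hτ : Measurable τ) (hW : ∀ n, Integrable (W n) μ)
    (hstep : ∀ n, ∫ ω in {ω | n < τ ω}, W (n + 1) ω ∂μ ≤ ∫ ω in {ω | n < τ ω}, W n ω ∂μ)
    (n : ℕ) : ∫ ω, W (min (τ ω) n) ω ∂μ ≤ ∫ ω, W 0 ω ∂μ := by
  induction n with
  | zero => simp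
  | succ n ih =>
    have hs : MeasurableSet {ω | n < τ ω} := measurableSet_lt measurable_const hτ
    simp_rw [stopped_min_succ_eq W n]
    rw [integral_add (integrable_stopped_min hτ hW n) (((hW (n + 1)).sub (hW n)).indicator hs),
      integral_indicator hs, Pi.sub_def,
      integral_sub (hW (n + 1)).integrableOn (hW n).integrableOn]
    linarith [hstep n]

lemma integral_comp_le_of_integral_comp_min_le [IsFiniteMeasure μ] {g : ℕ → ℝ} (hg : 0 ≤ g)
    (hτ : Measurable τ) {C : ℝ} (h : ∀ n, ∫ ω, g (min (τ ω) n) ∂μ ≤ C) :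
    ∫ ω, g (τ ω) ∂μ ≤ C := by
  have hC : 0 ≤ C := (integral_nonneg fun ω => hg (min (τ ω) 0)).trans (h 0)
  have hmeas : ∀ n, Measurable fun ω => g (min (τ ω) n) :=
    fun n => measurable_from_top.comp (hτ.min measurable_const)
  have hint : ∀ n, Integrable (fun ω => g (min (τ ω) n)) μ := fun n =>
    Integrable.of_bound (hmeas n).aestronglyMeasurable (∑ k ∈ Finset.range (n + 1), g k)
      (ae_of_all _ fun ω => by
        rw [Real.norm_of_nonneg (hg _)]
        exact Finset.single_le_sum (fun k _ => hg k)
          (Finset.mem_range_succ_iff.mpr (min_le_right _ _)))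
  -- `min (τ ω) n` is eventually `τ ω`, so Fatou's lemma applies without any monotonicity of `g`.
  have hlim : ∀ ω, liminf (fun n => ENNReal.ofReal (g (min (τ ω) n))) atTop
      = ENNReal.ofReal (g (τ ω)) := fun ω =>
    (tendsto_atTop_of_eventually_const (i₀ := τ ω) fun n hn => by rw [min_eq_left hn]).liminf_eq
  have hfatou : ∫⁻ ω, ENNReal.ofReal (g (τ ω)) ∂μ ≤ ENNReal.ofReal C := by
    simp_rw [← hlim]
    refine (lintegral_liminf_le fun n => (hmeas n).ennreal_ofReal).trans
      (liminf_le_of_frequently_le' (Frequently.of_forall fun n => ?_))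
    rw [← ofReal_integral_eq_lintegral_ofReal (hint n) (ae_of_all _ fun ω => hg _)]
    exact ENNReal.ofReal_le_ofReal (h n)
  rw [integral_eq_lintegral_of_nonneg_ae (ae_of_all _ fun ω => hg (τ ω))
    (measurable_from_top.comp hτ).aestronglyMeasurable]
  exact ENNReal.toReal_le_of_le_ofReal hC hfatou

end StoppedProcess

theorem stmt12_general {Ω : Type*} [m0 : MeasurableSpace Ω] (μ : Measure Ω)
    [IsProbabilityMeasure μ]
    (ℱ : Filtration ℕ m0) (V : ℕ → Ω → ℝ) (τ : Ω → ℕ) (c : ℝ)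
    (hint : ∀ n, Integrable (V n) μ)
    (hV1 : ∀ n, ∀ᵐ ω ∂μ, 1 ≤ V n ω)
    (hτ : IsStoppingTime ℱ (fun ω => (τ ω : WithTop ℕ)))
    (hdrift : ∀ n, ∀ᵐ ω ∂μ, n < τ ω → (μ[V (n + 1) | ℱ n]) ω ≤ Real.exp (-c) * V n ω) :
    ∫ ω, Real.exp (c * (τ ω : ℝ)) ∂μ ≤ ∫ ω, V 0 ω ∂μ := by
  have hτm : Measurable τ := measurable_of_isStoppingTime_coe hτ
  set W : ℕ → Ω → ℝ := fun n ω => Real.exp (c * n) * V n ω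
  have hW : ∀ n, Integrable (W n) μ := fun n => (hint n).const_mul _
  have hstep : ∀ n, ∫ ω in {ω | n < τ ω}, W (n + 1) ω ∂μ ≤ ∫ ω in {ω | n < τ ω}, W n ω ∂μ := by
    intro n
    have hs : MeasurableSet[ℱ n] {ω | n < τ ω} := by simpa using hτ.measurableSet_gt n
    have hV := setIntegral_le_of_condExp_le (ℱ.le n) (hint (n + 1)) ((hint n).const_mul _) hs
      (hdrift n)
    simp only [W, integral_const_mul] at hV ⊢
    calc Real.exp (c * ↑(n + 1)) * ∫ ω in {ω | n < τ ω}, V (n + 1) ω ∂μ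
        ≤ Real.exp (c * ↑(n + 1)) * (Real.exp (-c) * ∫ ω in {ω | n < τ ω}, V n ω ∂μ) := by
          gcongr
      _ = Real.exp (c * n) * ∫ ω in {ω | n < τ ω}, V n ω ∂μ := by
          rw [← mul_assoc, ← Real.exp_add]; push_cast; ring_nf
  have hVall : ∀ᵐ ω ∂μ, ∀ k, 1 ≤ V k ω := ae_all_iff.2 hV1
  refine integral_comp_le_of_integral_comp_min_le (g := fun k => Real.exp (c * k))
    (fun k => (Real.exp_pos _).le) hτm fun n => ?_
  calc ∫ ω, Real.exp (c * (min (τ ω) n : ℕ)) ∂μ ≤ ∫ ω, W (min (τ ω) n) ω ∂μ :=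
        integral_mono_of_nonneg (ae_of_all _ fun ω => (Real.exp_pos _).le)
          (integrable_stopped_min hτm hW n)
          (hVall.mono fun ω hω => le_mul_of_one_le_right (Real.exp_pos _).le (hω _))
    _ ≤ ∫ ω, W 0 ω ∂μ := integral_stopped_min_le hτm hW hstep n
    _ = ∫ ω, V 0 ω ∂μ := by simp [W]

/-- Exponential moment of a hitting time from a supermartingale Lyapunov drift:
if V_n ≥ 1, and E[V_{n+1} | F_n] ≤ e^{-c} V_n on {n < τ}, then E[e^{cτ}] ≤ E[V_0]. -/
theorem stmt12 {Ω : Type*} [m0 : MeasurableSpace Ω] (μ : Measure Ω)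
    [IsProbabilityMeasure μ]
    (ℱ : Filtration ℕ m0) (V : ℕ → Ω → ℝ) (τ : Ω → ℕ) (c : ℝ)
    (hc : 0 < c)
    (hadapted : Adapted ℱ V)
    (hint : ∀ n, Integrable (V n) μ)
    (hV1 : ∀ n, ∀ᵐ ω ∂μ, 1 ≤ V n ω)
    (hτ : IsStoppingTime ℱ (fun ω => (τ ω : WithTop ℕ)))
    (hdrift : ∀ n, ∀ᵐ ω ∂μ, n < τ ω → (μ[V (n + 1) | ℱ n]) ω ≤ Real.exp (-c) * V n ω) :
    ∫ ω, Real.exp (c * (τ ω : ℝ)) ∂μ ≤ ∫ ω, V 0 ω ∂μ :=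
  stmt12_general (m0 := m0) μ ℱ V τ c hint hV1 hτ hdrift
end
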